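/- arXiv:2603.24999 — 3 statements merged into one kernel-verified Lean document; each statement's English description precedes it below -/
import Mathlib

section
/- For every natural number n ≥ 1 and data vectors x, y : Fin n → ℝ, the infimum over all non-decreasing functions f : ℝ → ℝ of the sum of squared errors SSE(f) = ∑_{r} (y r − f (x r))² is attained: there exists a non-decreasing function f̂ : ℝ → ℝ such that SSE(f̂) ≤ SSE(g) for every non-decreasing g : ℝ → ℝ. -/
/-! The vectors `(g (x r))_r` with `g` non-decreasing are exactly the `v` with
`x r ≤ x s → v r ≤ v s`, a closed subset of `ℝⁿ`; a closed nonempty subset of a finite-dimensional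
Euclidean space contains a point nearest to `y`, and any monotone extension of that point is
an isotonic regression. -/

noncomputable def sse {n : ℕ} (x y : Fin n → ℝ) (f : ℝ → ℝ) : ℝ :=
  ∑ r, (y r - f (x r)) ^ 2

theorem exists_monotone_comp_eq {ι α β : Type*} [Finite ι] [LinearOrder α]
    [ConditionallyCompleteLinearOrder β] [Nonempty β] {x : ι → α} {v : ι → β}
    (hv : ∀ i j, x i ≤ x j → v i ≤ v j) : ∃ g : α → β, Monotone g ∧ g ∘ x = v := by
  rcases isEmpty_or_nonempty ι with hι | hι
  · exact ⟨fun _ => Classical.arbitrary β, monotone_const, funext hι.elim⟩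
  set f : α → β := v ∘ Function.invFun x
  have hfx (i : ι) : x (Function.invFun x (x i)) = x i := Function.invFun_eq ⟨i, rfl⟩
  have hf : MonotoneOn f (Set.range x) := by
    rintro _ ⟨i, rfl⟩ _ ⟨j, rfl⟩ hij
    exact hv _ _ (by rwa [hfx, hfx])
  obtain ⟨g, hg, hfg⟩ := hf.exists_monotone_extension
    ((Set.finite_range x).image f).bddBelow ((Set.finite_range x).image f).bddAbove
  refine ⟨g, hg, funext fun i => ?_⟩
  rw [Function.comp_apply, ← hfg (Set.mem_range_self i)]
  exact le_antisymm (hv _ _ (hfx i).le) (hv _ _ (hfx i).ge)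

theorem isClosed_setOf_forall_le_of_le {ι α β : Type*} [Preorder α] [TopologicalSpace β]
    [Preorder β] [OrderClosedTopology β] (x : ι → α) :
    IsClosed {v : ι → β | ∀ i j, x i ≤ x j → v i ≤ v j} := by
  simp only [Set.ofPred_forall]
  exact isClosed_iInter fun i => isClosed_iInter fun j => isClosed_iInter fun _ =>
    isClosed_le (continuous_apply i) (continuous_apply j)

theorem IsClosed.exists_forall_sum_sq_sub_le {ι : Type*} [Fintype ι] {K : Set (ι → ℝ)}
    (hK : IsClosed K) (hne : K.Nonempty) (y : ι → ℝ) :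
    ∃ v ∈ K, ∀ w ∈ K, ∑ i, (y i - v i) ^ 2 ≤ ∑ i, (y i - w i) ^ 2 := by
  set e := EuclideanSpace.equiv ι ℝ
  have hdist (v : ι → ℝ) : dist (e.symm y) (e.symm v) ^ 2 = ∑ i, (y i - v i) ^ 2 := by
    simp [e, EuclideanSpace.dist_sq_eq, Real.dist_eq, sq_abs]
  obtain ⟨v, hv, hyv⟩ := (hK.preimage e.continuous).exists_infDist_eq_dist
    (hne.preimage e.surjective) (e.symm y)
  refine ⟨e v, hv, fun w hw => ?_⟩
  rw [← hdist, ← hdist, ContinuousLinearEquiv.symm_apply_apply, ← hyv]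
  exact pow_le_pow_left₀ Metric.infDist_nonneg
    (Metric.infDist_le_dist_of_mem (by simpa using hw)) 2

theorem isotonic_regression_exists_general (n : ℕ) (x y : Fin n → ℝ) :
    ∃ fhat : ℝ → ℝ, Monotone fhat ∧
      ∀ g : ℝ → ℝ, Monotone g → sse x y fhat ≤ sse x y g := by
  obtain ⟨v, hv, hmin⟩ := (isClosed_setOf_forall_le_of_le x).exists_forall_sum_sq_sub_le
    ⟨0, fun _ _ _ => le_rfl⟩ y
  obtain ⟨fhat, hmono, rfl⟩ := exists_monotone_comp_eq hv
  exact ⟨fhat, hmono, fun g hg => hmin (g ∘ x) fun _ _ hij => hg hij⟩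

/-- The infimum of the isotonic-regression sum of squared errors is attained:
there is a non-decreasing `f̂` whose SSE is at most that of every non-decreasing `g`. -/
theorem isotonic_regression_exists (n : ℕ) (hn : 1 ≤ n) (x y : Fin n → ℝ) :
    ∃ fhat : ℝ → ℝ, Monotone fhat ∧
      ∀ g : ℝ → ℝ, Monotone g → sse x y fhat ≤ sse x y g :=
  isotonic_regression_exists_general n x y
end

section
/- Let n ≥ 1 and x, y : Fin n → ℝ with SST(x) > 0 and SST(y) > 0, and suppose the sample covariance ∑_{r} (x r − x̄)(y r − ȳ) is nonnegative. Let r denote the sample Pearson correlation of x and y. Then the infimum over non-decreasing f : ℝ → ℝ of SSE(f) is at most (1 − r²) · SST(y); equivalently, the isotonic R² is at least the squared Pearson correlation: R²_iso ≥ r². (The ordinary least-squares affine fit has nonnegative slope and is therefore itself a monotone predictor.) -/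
/-- Mean of a data vector. -/
noncomputable def mean {n : ℕ} (y : Fin n → ℝ) : ℝ := (1 / n) * ∑ r, y r

/-- Total sum of squares of a data vector. -/
noncomputable def sst {n : ℕ} (y : Fin n → ℝ) : ℝ := ∑ r, (y r - mean y) ^ 2

/-- Sample covariance sum. -/
noncomputable def covSum {n : ℕ} (x y : Fin n → ℝ) : ℝ :=
  ∑ r, (x r - mean x) * (y r - mean y)

/-- Sample Pearson correlation. -/
noncomputable def pearson {n : ℕ} (x y : Fin n → ℝ) : ℝ :=
  covSum x y / Real.sqrt (sst x * sst y)

/-- Minimal sum of squared errors over all non-decreasing predictors. -/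
noncomputable def isoSSE {n : ℕ} (x y : Fin n → ℝ) : ℝ :=
  sInf {e : ℝ | ∃ f : ℝ → ℝ, Monotone f ∧ e = sse x y f}

/-- The isotonic coefficient of determination. -/
noncomputable def isoR2 {n : ℕ} (x y : Fin n → ℝ) : ℝ := 1 - isoSSE x y / sst y

/-
The least-squares line `t ↦ ȳ + (cov/SST(x))·(t - x̄)` has non-negative slope when the
covariance is non-negative, so it competes in the infimum defining the isotonic SSE, and
its own SSE is `SST(y) - cov²/SST(x) = (1 - r²)·SST(y)`.
-/

section

variable {n : ℕ}

lemma sst_nonneg (y : Fin n → ℝ) : 0 ≤ sst y :=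
  Finset.sum_nonneg fun _ _ => sq_nonneg _

lemma sse_nonneg (x y : Fin n → ℝ) (f : ℝ → ℝ) : 0 ≤ sse x y f :=
  Finset.sum_nonneg fun _ _ => sq_nonneg _

lemma isoSSE_le_sse (x y : Fin n → ℝ) {f : ℝ → ℝ} (hf : Monotone f) :
    isoSSE x y ≤ sse x y f :=
  csInf_le ⟨0, by rintro e ⟨g, -, rfl⟩; exact sse_nonneg x y g⟩ ⟨f, hf, rfl⟩

lemma sse_affine (x y : Fin n → ℝ) (b : ℝ) :
    sse x y (fun t => mean y + b * (t - mean x))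
      = sst y - 2 * b * covSum x y + b ^ 2 * sst x := by
  simp only [sse, sst, covSum, Finset.mul_sum, ← Finset.sum_sub_distrib,
    ← Finset.sum_add_distrib]
  exact Finset.sum_congr rfl fun _ _ => by ring

noncomputable def olsFit (x y : Fin n → ℝ) : ℝ → ℝ :=
  fun t => mean y + covSum x y / sst x * (t - mean x)

lemma olsFit_monotone {x y : Fin n → ℝ} (hcov : 0 ≤ covSum x y) :
    Monotone (olsFit x y) :=
  fun _ _ hst => add_le_add_right
    (mul_le_mul_of_nonneg_left (sub_le_sub_right hst _) (div_nonneg hcov (sst_nonneg x))) _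

lemma sse_olsFit {x : Fin n → ℝ} (hx : sst x ≠ 0) (y : Fin n → ℝ) :
    sse x y (olsFit x y) = sst y - covSum x y ^ 2 / sst x := by
  unfold olsFit
  rw [sse_affine]
  field_simp
  ring

lemma pearson_sq (x y : Fin n → ℝ) :
    pearson x y ^ 2 = covSum x y ^ 2 / (sst x * sst y) := by
  rw [pearson, div_pow, Real.sq_sqrt (mul_nonneg (sst_nonneg x) (sst_nonneg y))]

lemma one_sub_pearson_sq_mul_sst (x : Fin n → ℝ) {y : Fin n → ℝ} (hy : sst y ≠ 0) :
    (1 - pearson x y ^ 2) * sst y = sst y - covSum x y ^ 2 / sst x := by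
  rw [pearson_sq]
  field_simp

end

theorem isoR2_ge_pearson_sq_general (n : ℕ) (x y : Fin n → ℝ)
    (hSSTx : 0 < sst x) (hSSTy : 0 < sst y) (hcov : 0 ≤ covSum x y) :
    isoSSE x y ≤ (1 - pearson x y ^ 2) * sst y ∧ pearson x y ^ 2 ≤ isoR2 x y := by
  have hle : isoSSE x y ≤ (1 - pearson x y ^ 2) * sst y := by
    rw [one_sub_pearson_sq_mul_sst x hSSTy.ne', ← sse_olsFit hSSTx.ne']
    exact isoSSE_le_sse x y (olsFit_monotone hcov)
  refine ⟨hle, ?_⟩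
  rw [isoR2, le_sub_iff_add_le, ← le_sub_iff_add_le', div_le_iff₀ hSSTy]
  exact hle

/-- If the sample covariance is nonnegative, the minimal monotone SSE is at most
`(1 - r²)·SST(y)`; equivalently, the isotonic `R²` is at least the squared Pearson
correlation. -/
theorem isoR2_ge_pearson_sq (n : ℕ) (hn : 1 ≤ n) (x y : Fin n → ℝ)
    (hSSTx : 0 < sst x) (hSSTy : 0 < sst y) (hcov : 0 ≤ covSum x y) :
    isoSSE x y ≤ (1 - pearson x y ^ 2) * sst y ∧ pearson x y ^ 2 ≤ isoR2 x y :=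
  isoR2_ge_pearson_sq_general n x y hSSTx hSSTy hcov
end

section
/- Let n ≥ 1, y ∈ EuclideanSpace ℝ (Fin n), let ŷ be the metric projection of y onto the monotone cone K = { v | r ≤ s implies v r ≤ v s }, and let ȳ = (1/n) ∑_{r} y r. Then the total sum of squares decomposes as SST(y) = ∑_{r} (y r − ŷ r)² + ∑_{r} (ŷ r − ȳ)², where SST(y) = ∑_{r} (y r − ȳ)²; consequently, when SST(y) > 0 the isotonic R² equals the explained-variance ratio: 1 − (∑_{r} (y r − ŷ r)²)/SST(y) = (∑_{r} (ŷ r − ȳ)²)/SST(y). -/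
/-!
The isotonic fit `ŷ` is the projection of `y` onto the monotone cone, a convex cone
containing the constants in its lineality space. The variational inequality
`⟪y - ŷ, w - ŷ⟫ ≤ 0` for all `w` in the cone, tested at `w = ŷ ± 𝟙` and at `w = 2ŷ, 0`,
makes the residual `y - ŷ` orthogonal to `𝟙` and to `ŷ`, hence to `ŷ - ȳ 𝟙`, and the
decomposition is Pythagoras.
-/

open scoped RealInnerProductSpace

section Projection

variable {E : Type*} [NormedAddCommGroup E] [InnerProductSpace ℝ E] {K : Set E} {y p : E}

theorem real_inner_sub_le_zero_of_forall_norm_sub_le (hK : Convex ℝ K) (hp : p ∈ K)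
    (hmin : ∀ u ∈ K, ‖y - p‖ ≤ ‖y - u‖) : ∀ w ∈ K, ⟪y - p, w - p⟫ ≤ 0 := by
  have : Nonempty K := ⟨⟨p, hp⟩⟩
  refine (norm_eq_iInf_iff_real_inner_le_zero hK hp).mp (le_antisymm ?_ ?_)
  · exact le_ciInf fun w => hmin w w.2
  · exact ciInf_le ⟨0, Set.forall_mem_range.2 fun _ => norm_nonneg _⟩ (⟨p, hp⟩ : K)

theorem real_inner_sub_eq_zero_of_add_mem_of_sub_mem (hK : Convex ℝ K) (hp : p ∈ K)
    (hmin : ∀ u ∈ K, ‖y - p‖ ≤ ‖y - u‖) {v : E} (hadd : p + v ∈ K) (hsub : p - v ∈ K) :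
    ⟪y - p, v⟫ = 0 := by
  have hVI := real_inner_sub_le_zero_of_forall_norm_sub_le hK hp hmin
  have hplus := hVI _ hadd
  have hminus := hVI _ hsub
  rw [add_sub_cancel_left] at hplus
  rw [sub_sub_cancel_left, inner_neg_right] at hminus
  linarith

end Projection

def monotoneCone (ι : Type*) [Preorder ι] : PointedCone ℝ (EuclideanSpace ℝ ι) where
  carrier := {v | ∀ r s : ι, r ≤ s → v r ≤ v s}
  add_mem' hv hw r s h := add_le_add (hv r s h) (hw r s h)
  zero_mem' _ _ _ := le_rfl
  smul_mem' c _ hv r s h := mul_le_mul_of_nonneg_left (hv r s h) c.2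

section MonotoneCone

variable {ι : Type*} [Preorder ι]

theorem add_const_mem_monotoneCone {v : EuclideanSpace ℝ ι} (hv : v ∈ monotoneCone ι) (c : ℝ) :
    v + WithLp.toLp 2 (fun _ => c) ∈ monotoneCone ι :=
  fun r s h => add_le_add_left (hv r s h) c

theorem sub_const_mem_monotoneCone {v : EuclideanSpace ℝ ι} (hv : v ∈ monotoneCone ι) (c : ℝ) :
    v - WithLp.toLp 2 (fun _ => c) ∈ monotoneCone ι :=
  fun r s h => sub_le_sub_right (hv r s h) c

end MonotoneCone

theorem EuclideanSpace.sum_sq_sub_const_eq_add {ι : Type*} [Fintype ι]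
    {y p : EuclideanSpace ℝ ι} (hp : ⟪y - p, p⟫ = 0)
    (hone : ⟪y - p, WithLp.toLp 2 (fun _ => 1)⟫ = 0) (c : ℝ) :
    ∑ r, (y r - c) ^ 2 = ∑ r, (y r - p r) ^ 2 + ∑ r, (p r - c) ^ 2 := by
  set one : EuclideanSpace ℝ ι := WithLp.toLp 2 (fun _ => 1)
  have horth : ⟪y - p, p - c • one⟫ = 0 := by
    rw [inner_sub_right, inner_smul_right, hp, hone, mul_zero, sub_zero]
  have hpyth := norm_add_sq_eq_norm_sq_add_norm_sq_real horth
  rw [sub_add_sub_cancel, ← sq, ← sq, ← sq] at hpyth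
  simpa [EuclideanSpace.real_norm_sq_eq, one] using hpyth

theorem isotonic_sst_decomposition_general (n : ℕ)
    (y yhat : EuclideanSpace ℝ (Fin n))
    (hK : yhat ∈ {v : EuclideanSpace ℝ (Fin n) | ∀ r s : Fin n, r ≤ s → v r ≤ v s})
    (hmin : ∀ u ∈ {v : EuclideanSpace ℝ (Fin n) | ∀ r s : Fin n, r ≤ s → v r ≤ v s},
      ‖y - yhat‖ ≤ ‖y - u‖)
    (ybar : ℝ) :
    (∑ r, (y r - ybar) ^ 2) =
        (∑ r, (y r - yhat r) ^ 2) + (∑ r, (yhat r - ybar) ^ 2) ∧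
      (0 < ∑ r, (y r - ybar) ^ 2 →
        1 - (∑ r, (y r - yhat r) ^ 2) / (∑ r, (y r - ybar) ^ 2) =
          (∑ r, (yhat r - ybar) ^ 2) / (∑ r, (y r - ybar) ^ 2)) := by
  have hK : yhat ∈ monotoneCone (Fin n) := hK
  have hmin : ∀ u ∈ monotoneCone (Fin n), ‖y - yhat‖ ≤ ‖y - u‖ := hmin
  have hconv := (monotoneCone (Fin n)).convex
  have hone := real_inner_sub_eq_zero_of_add_mem_of_sub_mem hconv hK hmin
    (add_const_mem_monotoneCone hK 1) (sub_const_mem_monotoneCone hK 1)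
  have hself := real_inner_sub_eq_zero_of_add_mem_of_sub_mem hconv hK hmin
    (add_mem hK hK) (by rw [sub_self]; exact zero_mem _)
  have hdecomp := EuclideanSpace.sum_sq_sub_const_eq_add hself hone ybar
  refine ⟨hdecomp, fun hpos => ?_⟩
  rw [one_sub_div hpos.ne', hdecomp, add_sub_cancel_left]

/-- Sum-of-squares decomposition for the isotonic fit: `SST(y)` splits into the residual
sum of squares plus the explained sum of squares; hence when `SST(y) > 0`, the isotonic
`R²` equals the explained-variance ratio. -/
theorem isotonic_sst_decomposition (n : ℕ) (hn : 1 ≤ n)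
    (y yhat : EuclideanSpace ℝ (Fin n))
    (hK : yhat ∈ {v : EuclideanSpace ℝ (Fin n) | ∀ r s : Fin n, r ≤ s → v r ≤ v s})
    (hmin : ∀ u ∈ {v : EuclideanSpace ℝ (Fin n) | ∀ r s : Fin n, r ≤ s → v r ≤ v s},
      ‖y - yhat‖ ≤ ‖y - u‖)
    (ybar : ℝ) (hybar : ybar = (1 / n) * ∑ r, y r) :
    (∑ r, (y r - ybar) ^ 2) =
        (∑ r, (y r - yhat r) ^ 2) + (∑ r, (yhat r - ybar) ^ 2) ∧
      (0 < ∑ r, (y r - ybar) ^ 2 →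
        1 - (∑ r, (y r - yhat r) ^ 2) / (∑ r, (y r - ybar) ^ 2) =
          (∑ r, (yhat r - ybar) ^ 2) / (∑ r, (y r - ybar) ^ 2)) :=
  isotonic_sst_decomposition_general n y yhat hK hmin ybar
end
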